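/- arXiv:2006.04313 — 3 statements merged into one kernel-verified Lean document; each statement's English description precedes it below -/
import Mathlib

section
/- In the two-sided sequential matching model, assume every consumer is easy-to-match, i.e., p_i(j,{j}) ≥ 1/2 for all i ∈ N and j ∈ V, and assume every demand function Q_j : 2^N → [0,1] is monotone, submodular, and satisfies Q_j(∅) = 0. Let (A_1,…,A_m) be a tuple of pairwise disjoint (possibly empty) subsets of N whose union is N, and let S be the assortment family with S_i = {j} for every i ∈ A_j. Then E[M_S] ≥ (1/2)·Σ_{j∈V} r_j Q_j(A_j). -/
/-- Expected revenue of the matching when the assortment family is `S`: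
`E[M_S] = ∑_j r_j · E[Q_j(A_j^S)]`, where consumer `i` independently selects supplier `j`
with probability `pc i j (S i)`, so that `E[Q_j(A_j^S)]` is the multilinear extension of
`Q j` evaluated at the choice probabilities. -/
def expRev {ι κ : Type*} [Fintype ι] [Fintype κ] [DecidableEq ι]
    (pc : ι → κ → Finset κ → ℝ) (Q : κ → Finset ι → ℝ) (r : κ → ℝ)
    (S : ι → Finset κ) : ℝ :=
  ∑ j : κ, r j * ∑ A : Finset ι,
    Q j A * ((∏ i ∈ A, pc i j (S i)) * ∏ i ∈ Aᶜ, (1 - pc i j (S i)))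

/-!
Fix a supplier `j`. Its consumers `A_j` pick `j` independently with probability at least
`1/2` and everybody else never does, so `E[Q_j(A_j^S)]` is the multilinear extension `F` of
`Q_j` on the ground set `A_j`. Adding a consumer `e`, picked with probability `a`, to the
ground set `A` splits it as `F_{A+e}(Q) = (1 - a) F_A(Q) + a F_A(Q(insert e ·))`; by
induction both parts are at least half the sum of their values at the top and at the bottom,
and what is left over, `a ((Q{e} - Q∅) - (Q(A + e) - Q A)) + (2a - 1) (Q(A + e) - Q A)`,
is nonnegative by submodularity, monotonicity and `a ≥ 1/2`.
Hence `E[Q_j(A_j^S)] ≥ Q_j(A_j) / 2`.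
-/

open Finset

section

variable {ι : Type*} [DecidableEq ι]

def IsSubmodular (Q : Finset ι → ℝ) : Prop :=
  ∀ (A B : Finset ι) (e : ι), A ⊆ B → e ∉ B →
    Q (insert e B) - Q B ≤ Q (insert e A) - Q A

theorem IsSubmodular.comp_insert {Q : Finset ι → ℝ} (hQ : IsSubmodular Q) (e : ι) :
    IsSubmodular fun B ↦ Q (insert e B) := by
  intro A B x hAB hxB
  by_cases hxe : x = e
  · simp [hxe]
  · simp only [insert_comm e x]
    exact hQ _ _ x (insert_subset_insert e hAB) (by simp [hxe, hxB])

theorem Monotone.comp_insert {Q : Finset ι → ℝ} (hQ : Monotone Q) (e : ι) :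
    Monotone fun B ↦ Q (insert e B) :=
  fun _ _ h ↦ hQ (insert_subset_insert e h)

def multilinearExtOn (A : Finset ι) (p : ι → ℝ) (Q : Finset ι → ℝ) : ℝ :=
  ∑ B ∈ A.powerset, Q B * ((∏ i ∈ B, p i) * ∏ i ∈ A \ B, (1 - p i))

@[simp]
theorem multilinearExtOn_empty (p : ι → ℝ) (Q : Finset ι → ℝ) :
    multilinearExtOn ∅ p Q = Q ∅ := by
  simp [multilinearExtOn]

theorem multilinearExtOn_insert {e : ι} {A : Finset ι} (he : e ∉ A) (p : ι → ℝ)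
    (Q : Finset ι → ℝ) :
    multilinearExtOn (insert e A) p Q =
      (1 - p e) * multilinearExtOn A p Q +
        p e * multilinearExtOn A p (fun B ↦ Q (insert e B)) := by
  simp only [multilinearExtOn, sum_powerset_insert he, mul_sum]
  congr 1 <;> refine sum_congr rfl fun B hB ↦ ?_
  · have heB : e ∉ B := fun h ↦ he (mem_powerset.1 hB h)
    rw [insert_sdiff_of_notMem _ heB, prod_insert (fun h ↦ he (mem_sdiff.1 h).1)]
    ring
  · have heB : e ∉ B := fun h ↦ he (mem_powerset.1 hB h)
    rw [insert_sdiff_insert, sdiff_insert_of_notMem he, prod_insert heB]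
    ring

theorem add_div_two_le_multilinearExtOn (p : ι → ℝ) (A : Finset ι)
    (hp : ∀ i ∈ A, 1 / 2 ≤ p i ∧ p i ≤ 1) {Q : Finset ι → ℝ} (hmono : Monotone Q)
    (hsub : IsSubmodular Q) :
    (Q A + Q ∅) / 2 ≤ multilinearExtOn A p Q := by
  induction A using Finset.induction_on generalizing Q with
  | empty => simp
  | @insert e s he ih =>
    obtain ⟨hpe_ge, hpe_le⟩ := hp e (mem_insert_self e s)
    have hps : ∀ i ∈ s, 1 / 2 ≤ p i ∧ p i ≤ 1 := fun i hi ↦ hp i (mem_insert_of_mem hi)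
    have hbot := ih hps hmono hsub
    have htop : (Q (insert e s) + Q {e}) / 2 ≤ multilinearExtOn s p (fun B ↦ Q (insert e B)) :=
      ih hps (hmono.comp_insert e) (hsub.comp_insert e)
    have hgain : 0 ≤ Q (insert e s) - Q s := sub_nonneg.2 (hmono (subset_insert e s))
    have hdim : Q (insert e s) - Q s ≤ Q {e} - Q ∅ := by
      simpa using hsub ∅ s e (empty_subset s) he
    rw [multilinearExtOn_insert he]
    linear_combination mul_le_mul_of_nonneg_left hbot (by linarith : 0 ≤ 1 - p e) +
      mul_le_mul_of_nonneg_left htop (by linarith : 0 ≤ p e) +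
      (mul_nonneg (by linarith : 0 ≤ p e) (sub_nonneg.2 hdim) +
        mul_nonneg (by linarith : 0 ≤ 2 * p e - 1) hgain) / 2

theorem multilinearExtOn_eq_sum_univ [Fintype ι] {A : Finset ι} {p : ι → ℝ}
    (hp : ∀ i ∉ A, p i = 0) (Q : Finset ι → ℝ) :
    multilinearExtOn A p Q =
      ∑ B : Finset ι, Q B * ((∏ i ∈ B, p i) * ∏ i ∈ Bᶜ, (1 - p i)) := by
  rw [multilinearExtOn]
  refine sum_subset_zero_on_sdiff (subset_univ _) (fun B hB ↦ ?_) (fun B hB ↦ ?_)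
  · obtain ⟨x, hxB, hxA⟩ := not_subset.1 (mt mem_powerset.2 (mem_sdiff.1 hB).2)
    rw [prod_eq_zero hxB (hp x hxA), zero_mul, mul_zero]
  · have hsdiff : A \ B ⊆ Bᶜ := fun x hx ↦ mem_compl.2 (mem_sdiff.1 hx).2
    rw [prod_subset hsdiff fun x hx hxAB ↦ ?_]
    rw [hp x fun hxA ↦ hxAB (mem_sdiff.2 ⟨hxA, mem_compl.1 hx⟩), sub_zero]

end

theorem singleton_assortment_half_guarantee_general
    {ι κ : Type*} [Fintype ι] [Fintype κ] [DecidableEq ι]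
    (pc : ι → κ → Finset κ → ℝ)
    (hpcoff : ∀ (i : ι) (j : κ) (S : Finset κ), j ∉ S → pc i j S = 0)
    (hpcsum : ∀ (i : ι) (S : Finset κ), ∑ j ∈ S, pc i j S ≤ 1)
    (heasy : ∀ i j, 1 / 2 ≤ pc i j {j})
    (Q : κ → Finset ι → ℝ)
    (hQ0 : ∀ j, Q j ∅ = 0)
    (hQmono : ∀ j (A B : Finset ι), A ⊆ B → Q j A ≤ Q j B)
    (hQsub : ∀ j (A B : Finset ι) (e : ι), A ⊆ B → e ∉ B →
      Q j (insert e B) - Q j B ≤ Q j (insert e A) - Q j A)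
    (r : κ → ℝ) (hr : ∀ j, 0 ≤ r j)
    (A : κ → Finset ι)
    (hcover : Finset.univ.biUnion A = Finset.univ)
    (S : ι → Finset κ) (hS : ∀ j, ∀ i ∈ A j, S i = {j}) :
    (1 / 2) * ∑ j : κ, r j * Q j (A j) ≤ expRev pc Q r S := by
  rw [expRev, mul_sum]
  refine sum_le_sum fun j _ ↦ ?_
  have hout : ∀ i ∉ A j, pc i j (S i) = 0 := by
    intro i hi
    obtain ⟨j', -, hij'⟩ := mem_biUnion.1 (hcover ▸ mem_univ i)
    rw [hS j' i hij']
    exact hpcoff i j {j'} (by rw [mem_singleton]; rintro rfl; exact hi hij')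
  have hin : ∀ i ∈ A j, 1 / 2 ≤ pc i j (S i) ∧ pc i j (S i) ≤ 1 := fun i hi ↦ by
    rw [hS j i hi]
    exact ⟨heasy i j, by simpa using hpcsum i {j}⟩
  rw [← multilinearExtOn_eq_sum_univ hout]
  have hhalf := add_div_two_le_multilinearExtOn _ (A j) hin (fun _ _ ↦ hQmono j _ _) (hQsub j)
  rw [hQ0, add_zero] at hhalf
  calc 1 / 2 * (r j * Q j (A j)) = r j * (Q j (A j) / 2) := by ring
    _ ≤ _ := mul_le_mul_of_nonneg_left hhalf (hr j)

/-- In the two-sided sequential matching model with easy-to-match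
consumers and monotone submodular demand functions, the singleton assortment family
induced by a partition `(A_1,…,A_m)` of the consumers satisfies
`E[M_S] ≥ (1/2)·∑_j r_j Q_j(A_j)`. -/
theorem singleton_assortment_half_guarantee
    {ι κ : Type*} [Fintype ι] [Fintype κ] [DecidableEq ι] [DecidableEq κ]
    (pc : ι → κ → Finset κ → ℝ)
    (hpc0 : ∀ i j S, 0 ≤ pc i j S)
    (hpcoff : ∀ (i : ι) (j : κ) (S : Finset κ), j ∉ S → pc i j S = 0)
    (hpcsum : ∀ (i : ι) (S : Finset κ), ∑ j ∈ S, pc i j S ≤ 1)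
    (heasy : ∀ i j, 1 / 2 ≤ pc i j {j})
    (Q : κ → Finset ι → ℝ)
    (hQrange : ∀ j A, Q j A ∈ Set.Icc (0 : ℝ) 1)
    (hQ0 : ∀ j, Q j ∅ = 0)
    (hQmono : ∀ j (A B : Finset ι), A ⊆ B → Q j A ≤ Q j B)
    (hQsub : ∀ j (A B : Finset ι) (e : ι), A ⊆ B → e ∉ B →
      Q j (insert e B) - Q j B ≤ Q j (insert e A) - Q j A)
    (r : κ → ℝ) (hr : ∀ j, 0 ≤ r j)
    (A : κ → Finset ι)
    (hdisj : ∀ j j', j ≠ j' → Disjoint (A j) (A j'))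
    (hcover : Finset.univ.biUnion A = Finset.univ)
    (S : ι → Finset κ) (hS : ∀ j, ∀ i ∈ A j, S i = {j}) :
    (1 / 2) * ∑ j : κ, r j * Q j (A j) ≤ expRev pc Q r S :=
  singleton_assortment_half_guarantee_general pc hpcoff hpcsum heasy Q hQ0 hQmono hQsub r hr A
    hcover S hS
end

section
/- In the two-sided sequential matching model, assume every demand function Q_j : 2^N → [0,1] is monotone with Q_j(∅) = 0, and let Q_min = min_{j∈V, i∈N} Q_j({i}). Then for every assortment family S = (S_1,…,S_n), with η_j(S) = Σ_{i∈N} p_i(j,S_i)·1{j ∈ S_i}: (1 − 1/e)·Q_min·Σ_{j∈V} r_j·min{1, η_j(S)} ≤ E[M_S] ≤ Σ_{j∈V} r_j·min{1, η_j(S)}. In particular, if every supplier is easy-to-match, i.e., Q_j({i}) ≥ 1/2 for all j ∈ V and i ∈ N, the lower bound holds with factor (1 − 1/e)/2 in place of (1 − 1/e)·Q_min. -/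
open Finset

lemma one_sub_sum_le_prod_one_sub {ι : Type*} (s : Finset ι) {p : ι → ℝ}
    (hp0 : ∀ i, 0 ≤ p i) (hp1 : ∀ i, p i ≤ 1) :
    1 - ∑ i ∈ s, p i ≤ ∏ i ∈ s, (1 - p i) := by
  classical
  induction s using Finset.induction with
  | empty => simp
  | insert a s ha ih =>
    rw [sum_insert ha, prod_insert ha]
    have hsum : 0 ≤ ∑ i ∈ s, p i := sum_nonneg fun i _ => hp0 i
    nlinarith [hp0 a, mul_le_mul_of_nonneg_left ih (sub_nonneg.2 (hp1 a))]

lemma prod_one_sub_le_exp_neg_sum {ι : Type*} (s : Finset ι) {p : ι → ℝ}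
    (hp1 : ∀ i, p i ≤ 1) :
    ∏ i ∈ s, (1 - p i) ≤ Real.exp (-∑ i ∈ s, p i) := by
  rw [← sum_neg_distrib, Real.exp_sum]
  exact prod_le_prod (fun i _ => sub_nonneg.2 (hp1 i)) fun i _ => Real.one_sub_le_exp_neg (p i)

/-- The chord of the concave function `1 - exp (-x)` on `[0, 1]` lies below it. -/
lemma one_sub_exp_inv_mul_le_one_sub_exp_neg {x : ℝ} (h0 : 0 ≤ x) (h1 : x ≤ 1) :
    (1 - (Real.exp 1)⁻¹) * x ≤ 1 - Real.exp (-x) := by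
  have h := convexOn_exp.2 (Set.mem_univ 0) (Set.mem_univ (-1)) (sub_nonneg.2 h1) h0
    (sub_add_cancel 1 x)
  simp only [smul_eq_mul, mul_zero, zero_add, mul_neg_one, Real.exp_zero, mul_one,
    Real.exp_neg] at h
  rw [Real.exp_neg]
  linarith

section IndependentTrials

variable {ι : Type*} [Fintype ι] {p : ι → ℝ}

lemma one_sub_prod_one_sub_le_min (hp0 : ∀ i, 0 ≤ p i) (hp1 : ∀ i, p i ≤ 1) :
    1 - ∏ i, (1 - p i) ≤ min 1 (∑ i, p i) :=
  le_min (sub_le_self _ (prod_nonneg fun i _ => sub_nonneg.2 (hp1 i)))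
    (by linarith [one_sub_sum_le_prod_one_sub univ hp0 hp1])

lemma one_sub_exp_inv_mul_min_le (hp0 : ∀ i, 0 ≤ p i) (hp1 : ∀ i, p i ≤ 1) :
    (1 - (Real.exp 1)⁻¹) * min 1 (∑ i, p i) ≤ 1 - ∏ i, (1 - p i) := by
  have hmin : 0 ≤ min 1 (∑ i, p i) := le_min zero_le_one (sum_nonneg fun i _ => hp0 i)
  calc (1 - (Real.exp 1)⁻¹) * min 1 (∑ i, p i)
      ≤ 1 - Real.exp (-min 1 (∑ i, p i)) :=
        one_sub_exp_inv_mul_le_one_sub_exp_neg hmin (min_le_left _ _)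
    _ ≤ 1 - Real.exp (-∑ i, p i) := by gcongr; exact min_le_right _ _
    _ ≤ 1 - ∏ i, (1 - p i) := by linarith [prod_one_sub_le_exp_neg_sum univ hp1]

variable [DecidableEq ι]

/-- The probability that the set of successes of independent trials, trial `i` succeeding with
probability `p i`, is exactly `A`. -/
def bernoulliSetProb (p : ι → ℝ) (A : Finset ι) : ℝ :=
  (∏ i ∈ A, p i) * ∏ i ∈ Aᶜ, (1 - p i)

lemma bernoulliSetProb_nonneg (hp0 : ∀ i, 0 ≤ p i) (hp1 : ∀ i, p i ≤ 1) (A : Finset ι) :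
    0 ≤ bernoulliSetProb p A :=
  mul_nonneg (prod_nonneg fun i _ => hp0 i) (prod_nonneg fun i _ => sub_nonneg.2 (hp1 i))

lemma sum_bernoulliSetProb (p : ι → ℝ) : ∑ A, bernoulliSetProb p A = 1 := by
  simpa [bernoulliSetProb] using (Fintype.prod_add p fun i => 1 - p i).symm

lemma sum_erase_empty_bernoulliSetProb (p : ι → ℝ) :
    ∑ A ∈ univ.erase ∅, bernoulliSetProb p A = 1 - ∏ i, (1 - p i) := by
  have h := sum_bernoulliSetProb p
  rw [← add_sum_erase _ _ (mem_univ ∅)] at h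
  have hempty : bernoulliSetProb p ∅ = ∏ i, (1 - p i) := by simp [bernoulliSetProb]
  linarith

lemma sum_mul_bernoulliSetProb_eq_sum_erase_empty (p : ι → ℝ) {f : Finset ι → ℝ}
    (hf0 : f ∅ = 0) :
    ∑ A, f A * bernoulliSetProb p A = ∑ A ∈ univ.erase ∅, f A * bernoulliSetProb p A := by
  rw [← add_sum_erase _ _ (mem_univ ∅), hf0, zero_mul, zero_add]

lemma expectation_bounds_of_bernoulliSetProb (hp0 : ∀ i, 0 ≤ p i) (hp1 : ∀ i, p i ≤ 1)
    {f : Finset ι → ℝ} (hf0 : f ∅ = 0) (hf1 : ∀ A, f A ≤ 1) {c : ℝ} (hc : 0 ≤ c)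
    (hcf : ∀ A : Finset ι, A.Nonempty → c ≤ f A) :
    (1 - (Real.exp 1)⁻¹) * c * min 1 (∑ i, p i) ≤ ∑ A, f A * bernoulliSetProb p A ∧
      ∑ A, f A * bernoulliSetProb p A ≤ min 1 (∑ i, p i) := by
  have hw := bernoulliSetProb_nonneg hp0 hp1
  have hnonempty : ∀ A ∈ univ.erase (∅ : Finset ι), A.Nonempty := fun A hA =>
    nonempty_iff_ne_empty.2 (mem_erase.1 hA).1
  rw [sum_mul_bernoulliSetProb_eq_sum_erase_empty p hf0]
  constructor
  · calc (1 - (Real.exp 1)⁻¹) * c * min 1 (∑ i, p i)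
        = c * ((1 - (Real.exp 1)⁻¹) * min 1 (∑ i, p i)) := by ring
      _ ≤ c * (1 - ∏ i, (1 - p i)) := by gcongr; exact one_sub_exp_inv_mul_min_le hp0 hp1
      _ = ∑ A ∈ univ.erase ∅, c * bernoulliSetProb p A := by
        rw [← mul_sum, sum_erase_empty_bernoulliSetProb]
      _ ≤ ∑ A ∈ univ.erase ∅, f A * bernoulliSetProb p A :=
        sum_le_sum fun A hA => mul_le_mul_of_nonneg_right (hcf A (hnonempty A hA)) (hw A)
  · calc ∑ A ∈ univ.erase ∅, f A * bernoulliSetProb p A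
        ≤ ∑ A ∈ univ.erase ∅, bernoulliSetProb p A :=
          sum_le_sum fun A _ => mul_le_of_le_one_left (hw A) (hf1 A)
      _ = 1 - ∏ i, (1 - p i) := sum_erase_empty_bernoulliSetProb p
      _ ≤ min 1 (∑ i, p i) := one_sub_prod_one_sub_le_min hp0 hp1

end IndependentTrials

lemma choiceProb_le_one {ι κ : Type*} {pc : ι → κ → Finset κ → ℝ}
    (hpc0 : ∀ i j S, 0 ≤ pc i j S)
    (hpcoff : ∀ (i : ι) (j : κ) (S : Finset κ), j ∉ S → pc i j S = 0)
    (hpcsum : ∀ (i : ι) (S : Finset κ), ∑ j ∈ S, pc i j S ≤ 1) (i : ι) (j : κ)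
    (S : Finset κ) : pc i j S ≤ 1 := by
  by_cases hj : j ∈ S
  · exact (single_le_sum (fun k _ => hpc0 i k S) hj).trans (hpcsum i S)
  · exact (hpcoff i j S hj).trans_le zero_le_one

/-- **Lemma 3.2.** With monotone demand functions vanishing at `∅`, the
expected revenue is sandwiched between `(1 − 1/e)·Q_min·∑_j r_j min{1, η_j(S)}` and
`∑_j r_j min{1, η_j(S)}`, where `η_j(S)` is the expected number of consumers picking
supplier `j`; if every supplier is easy-to-match the lower-bound factor is `(1 − 1/e)/2`. -/
theorem expected_revenue_double_bound
    {ι κ : Type*} [Fintype ι] [Fintype κ] [DecidableEq ι] [DecidableEq κ]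
    [Nonempty ι] [Nonempty κ]
    (pc : ι → κ → Finset κ → ℝ)
    (hpc0 : ∀ i j S, 0 ≤ pc i j S)
    (hpcoff : ∀ (i : ι) (j : κ) (S : Finset κ), j ∉ S → pc i j S = 0)
    (hpcsum : ∀ (i : ι) (S : Finset κ), ∑ j ∈ S, pc i j S ≤ 1)
    (Q : κ → Finset ι → ℝ)
    (hQrange : ∀ j A, Q j A ∈ Set.Icc (0 : ℝ) 1)
    (hQ0 : ∀ j, Q j ∅ = 0)
    (hQmono : ∀ j (A B : Finset ι), A ⊆ B → Q j A ≤ Q j B)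
    (r : κ → ℝ) (hr : ∀ j, 0 ≤ r j)
    (S : ι → Finset κ) :
    ((1 - (Real.exp 1)⁻¹) *
        ((Finset.univ : Finset (κ × ι)).inf' Finset.univ_nonempty fun q => Q q.1 {q.2}) *
        ∑ j : κ, r j * min 1 (∑ i : ι, if j ∈ S i then pc i j (S i) else 0) ≤
      expRev pc Q r S) ∧
    (expRev pc Q r S ≤
      ∑ j : κ, r j * min 1 (∑ i : ι, if j ∈ S i then pc i j (S i) else 0)) ∧
    ((∀ (j : κ) (i : ι), 1 / 2 ≤ Q j {i}) →
      ((1 - (Real.exp 1)⁻¹) / 2) *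
          ∑ j : κ, r j * min 1 (∑ i : ι, if j ∈ S i then pc i j (S i) else 0) ≤
        expRev pc Q r S) := by
  set Qmin := (univ : Finset (κ × ι)).inf' univ_nonempty fun q => Q q.1 {q.2}
  have hη : ∀ j, (∑ i, if j ∈ S i then pc i j (S i) else 0) = ∑ i, pc i j (S i) := fun j =>
    sum_congr rfl fun i _ => ite_eq_left_iff.2 fun hj => (hpcoff i j (S i) hj).symm
  have hQmin_le : ∀ j (A : Finset ι), A.Nonempty → Qmin ≤ Q j A := fun j A ⟨i, hi⟩ =>
    (inf'_le _ (mem_univ (j, i))).trans (hQmono j {i} A (singleton_subset_iff.2 hi))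
  have hbounds := fun j => expectation_bounds_of_bernoulliSetProb (fun i => hpc0 i j (S i))
    (fun i => choiceProb_le_one hpc0 hpcoff hpcsum i j (S i)) (hQ0 j) (fun A => (hQrange j A).2)
    (c := Qmin) (le_inf' _ _ fun q _ => (hQrange q.1 {q.2}).1) (hQmin_le j)
  have lower : (1 - (Real.exp 1)⁻¹) * Qmin *
      ∑ j, r j * min 1 (∑ i, if j ∈ S i then pc i j (S i) else 0) ≤ expRev pc Q r S := by
    rw [expRev, mul_sum]
    refine sum_le_sum fun j _ => ?_
    rw [hη, mul_left_comm]
    exact mul_le_mul_of_nonneg_left (hbounds j).1 (hr j)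
  refine ⟨lower, sum_le_sum fun j _ => ?_, fun heasy => le_trans ?_ lower⟩
  · rw [hη]
    exact mul_le_mul_of_nonneg_left (hbounds j).2 (hr j)
  · have hQmin : 1 / 2 ≤ Qmin := le_inf' _ _ fun q _ => heasy q.1 q.2
    have he : 0 ≤ 1 - (Real.exp 1)⁻¹ :=
      sub_nonneg.2 (inv_le_one_of_one_le₀ (Real.one_le_exp zero_le_one))
    have hsum : 0 ≤ ∑ j, r j * min 1 (∑ i, if j ∈ S i then pc i j (S i) else 0) :=
      sum_nonneg fun j _ => mul_nonneg (hr j) ((hη j).symm ▸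
        le_min zero_le_one (sum_nonneg fun i _ => hpc0 i j (S i)))
    rw [div_eq_mul_one_div]
    gcongr
end

section
/- In the two-sided sequential matching model, assume each supplier j follows a multinomial logit model, i.e., Q_j(A) = (Σ_{k∈A} u_jk)/(u_j0 + Σ_{k∈A} u_jk) for A ⊆ N, where u_jk > 0 for all k ∈ N and u_j0 > 0. Then for every assortment family S = (S_1,…,S_n): E[M_S] ≤ Σ_{j∈V} r_j·μ_j(S)/(u_j0 + μ_j(S)), where μ_j(S) = Σ_{i∈N} u_ji·p_i(j,S_i)·1{j ∈ S_i}. -/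
/-!
Fix a supplier `j`. Its customer set `A` is random with independent memberships, and its demand
is `f (T A)` with `T A = ∑ k ∈ A, u j k` and `f x = x / (u0 j + x)`, a concave function on
`[0, ∞)`. Jensen's inequality, here via the tangent line of `f` at `μ_j = E[T]`, gives
`E[f T] ≤ f (E[T])`, and `E[T] = μ_j` by linearity of expectation.
-/

section BernoulliWeight

variable {ι R : Type*} [Fintype ι] [DecidableEq ι]

/-- The probability that the set of successes of independent Bernoulli trials with success
probabilities `q i` is exactly `A`. -/
def bernoulliWeight [CommRing R] (q : ι → R) (A : Finset ι) : R :=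
  (∏ i ∈ A, q i) * ∏ i ∈ Aᶜ, (1 - q i)

theorem bernoulliWeight_nonneg [CommRing R] [PartialOrder R] [IsOrderedRing R] {q : ι → R}
    (hq : ∀ i, 0 ≤ q i ∧ q i ≤ 1) (A : Finset ι) : 0 ≤ bernoulliWeight q A :=
  mul_nonneg (Finset.prod_nonneg fun i _ => (hq i).1)
    (Finset.prod_nonneg fun i _ => sub_nonneg.2 (hq i).2)

theorem sum_bernoulliWeight [CommRing R] (q : ι → R) : ∑ A, bernoulliWeight q A = 1 := by
  simpa [bernoulliWeight] using (Fintype.prod_add q (1 - q)).symm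

theorem sum_bernoulliWeight_filter_mem [CommRing R] (q : ι → R) (k : ι) :
    ∑ A with k ∈ A, bernoulliWeight q A = q k := by
  -- Replacing the factor `1 - q k` by `0` kills exactly the sets that miss `k`.
  have h := Fintype.prod_add q (fun i => if i = k then 0 else 1 - q i)
  rw [Finset.prod_eq_single_of_mem k (Finset.mem_univ k) fun i _ hik => by simp [hik], if_pos rfl,
    add_zero] at h
  rw [h, Finset.sum_filter]
  refine Finset.sum_congr rfl fun A _ => ?_
  unfold bernoulliWeight
  split_ifs with hkA
  · refine congrArg _ (Finset.prod_congr rfl fun i hi => (if_neg ?_).symm)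
    rintro rfl
    exact Finset.mem_compl.1 hi hkA
  · rw [Finset.prod_eq_zero (Finset.mem_compl.2 hkA) (by simp), mul_zero]

theorem sum_sum_mul_bernoulliWeight [CommRing R] (q u : ι → R) :
    ∑ A, (∑ k ∈ A, u k) * bernoulliWeight q A = ∑ k, u k * q k := by
  simp_rw [← sum_bernoulliWeight_filter_mem q, Finset.mul_sum, Finset.sum_mul, Finset.sum_filter]
  rw [Finset.sum_comm]
  simp only [Finset.sum_ite_mem, Finset.univ_inter]

end BernoulliWeight

theorem div_add_le_tangent {a x m : ℝ} (ha : 0 ≤ a) (hx : 0 < a + x) (hm : 0 < a + m) :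
    x / (a + x) ≤ m / (a + m) + a / (a + m) ^ 2 * (x - m) := by
  have key : m / (a + m) + a / (a + m) ^ 2 * (x - m) - x / (a + x)
      = a * (x - m) ^ 2 / ((a + m) ^ 2 * (a + x)) := by
    field_simp
    ring
  have : 0 ≤ a * (x - m) ^ 2 / ((a + m) ^ 2 * (a + x)) := by positivity
  linarith

theorem Finset.sum_div_add_mul_le {α : Type*} (s : Finset α) {w T : α → ℝ} {a : ℝ}
    (hw : ∀ i ∈ s, 0 ≤ w i) (hw1 : ∑ i ∈ s, w i = 1) (hT : ∀ i ∈ s, 0 ≤ T i) (ha : 0 < a) :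
    ∑ i ∈ s, T i / (a + T i) * w i ≤ (∑ i ∈ s, T i * w i) / (a + ∑ i ∈ s, T i * w i) := by
  set m := ∑ i ∈ s, T i * w i with hm_def
  have hm : 0 ≤ m := Finset.sum_nonneg fun i hi => mul_nonneg (hT i hi) (hw i hi)
  calc ∑ i ∈ s, T i / (a + T i) * w i
      ≤ ∑ i ∈ s, (m / (a + m) + a / (a + m) ^ 2 * (T i - m)) * w i :=
        Finset.sum_le_sum fun i hi => mul_le_mul_of_nonneg_right
          (div_add_le_tangent ha.le (by linarith [hT i hi]) (by linarith)) (hw i hi)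
    _ = m / (a + m) := by
        simp only [add_mul, mul_assoc, sub_mul, Finset.sum_add_distrib, Finset.sum_sub_distrib,
          ← Finset.mul_sum]
        rw [← hm_def, hw1]
        ring

/-- **Lemma 3.9.** When each supplier `j` follows a multinomial logit
model with scores `u_{jk} > 0` and outside-option score `u_{j0} > 0`, the expected
revenue of any assortment family is at most
`∑_j r_j · μ_j(S) / (u_{j0} + μ_j(S))`, where
`μ_j(S) = ∑_i u_{ji} p_i(j, S_i) 1{j ∈ S_i}`. -/
theorem mnl_supplier_upper_bound
    {ι κ : Type*} [Fintype ι] [Fintype κ] [DecidableEq ι] [DecidableEq κ]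
    (pc : ι → κ → Finset κ → ℝ)
    (hpc0 : ∀ i j S, 0 ≤ pc i j S)
    (hpcoff : ∀ (i : ι) (j : κ) (S : Finset κ), j ∉ S → pc i j S = 0)
    (hpcsum : ∀ (i : ι) (S : Finset κ), ∑ j ∈ S, pc i j S ≤ 1)
    (u : κ → ι → ℝ) (hu : ∀ j k, 0 < u j k)
    (u0 : κ → ℝ) (hu0 : ∀ j, 0 < u0 j)
    (r : κ → ℝ) (hr : ∀ j, 0 ≤ r j)
    (S : ι → Finset κ) :
    expRev pc (fun j A => (∑ k ∈ A, u j k) / (u0 j + ∑ k ∈ A, u j k)) r S ≤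
      ∑ j : κ, r j *
        ((∑ i : ι, u j i * (if j ∈ S i then pc i j (S i) else 0)) /
          (u0 j + ∑ i : ι, u j i * (if j ∈ S i then pc i j (S i) else 0))) := by
  refine Finset.sum_le_sum fun j _ => mul_le_mul_of_nonneg_left ?_ (hr j)
  have hq : ∀ i, 0 ≤ pc i j (S i) ∧ pc i j (S i) ≤ 1 := by
    refine fun i => ⟨hpc0 i j (S i), ?_⟩
    by_cases hj : j ∈ S i
    · exact (Finset.single_le_sum (fun j' _ => hpc0 i j' (S i)) hj).trans (hpcsum i (S i))
    · exact (hpcoff i j (S i) hj).le.trans zero_le_one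
  have hμ : ∑ i, u j i * (if j ∈ S i then pc i j (S i) else 0) = ∑ i, u j i * pc i j (S i) :=
    Finset.sum_congr rfl fun i _ => by split_ifs with hj <;> simp [hpcoff i j (S i), hj]
  rw [hμ, ← sum_sum_mul_bernoulliWeight (fun i => pc i j (S i)) (u j)]
  exact Finset.sum_div_add_mul_le _ (fun A _ => bernoulliWeight_nonneg hq A)
    (sum_bernoulliWeight _) (fun A _ => Finset.sum_nonneg fun k _ => (hu j k).le) (hu0 j)
end
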